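/- arXiv:2401.00323 — 2 statements merged into one kernel-verified Lean document; each statement's English description precedes it below -/
import Mathlib

section
/- The boundary of the octahedron, viewed as a 2-complex (8 triangular faces on 6 vertices given by choosing one vertex from each of three disjoint pairs), is a circlet: its face set cannot be partitioned into two nonempty parts each forming an even 2-complex. -/
def EvenPart {V : Type*} [DecidableEq V] (S : Finset (Finset V)) : Prop :=
  ∀ e : Finset V, e.card = 2 → Even ((S.filter fun f => e ⊆ f).card)

private def F (i j k : Bool) : Finset (Fin 3 × Bool) := {(0,i),(1,j),(2,k)}

private def OctL : Finset (Finset (Fin 3 × Bool)) :=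
  {F false false false, F false false true, F false true false, F false true true,
   F true false false, F true false true, F true true false, F true true true}

set_option maxRecDepth 10000 in
private lemma oct_eq : (Finset.univ.filter fun s : Finset (Fin 3 × Bool) =>
    s.card = 3 ∧ s.image Prod.fst = Finset.univ) = OctL := by decide

set_option maxRecDepth 10000 in
private lemma octEven : EvenPart OctL := by unfold EvenPart; decide

private lemma pairEven {X : Type*} [DecidableEq X] (A : Finset X) (f1 f2 : X) (h : f1 ≠ f2)
    (hEv : Even ((A.filter fun f => f = f1 ∨ f = f2).card)) : (f1 ∈ A ↔ f2 ∈ A) := by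
  by_cases h1 : f1 ∈ A <;> by_cases h2 : f2 ∈ A
  · exact iff_of_true h1 h2
  · exfalso; simp [Finset.filter_or, Finset.filter_eq', h1, h2] at hEv
  · exfalso; simp [Finset.filter_or, Finset.filter_eq', h1, h2] at hEv
  · exact iff_of_false h1 h2

private lemma edge01 : ∀ i j : Bool, ∀ f ∈ OctL,
    (({(0,i),(1,j)} : Finset (Fin 3 × Bool)) ⊆ f ↔ (f = F i j false ∨ f = F i j true)) := by
  decide

private lemma edge02 : ∀ i k : Bool, ∀ f ∈ OctL,
    (({(0,i),(2,k)} : Finset (Fin 3 × Bool)) ⊆ f ↔ (f = F i false k ∨ f = F i true k)) := by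
  decide

private lemma edge12 : ∀ j k : Bool, ∀ f ∈ OctL,
    (({(1,j),(2,k)} : Finset (Fin 3 × Bool)) ⊆ f ↔ (f = F false j k ∨ f = F true j k)) := by
  decide

private lemma key : ∀ A : Finset (Finset (Fin 3 × Bool)), A ⊆ OctL → EvenPart A →
    A = ∅ ∨ A = OctL := by
  intro A hA heA
  have mk : ∀ (e : Finset (Fin 3 × Bool)) (f1 f2 : Finset (Fin 3 × Bool)), e.card = 2 →
      f1 ≠ f2 → (∀ f ∈ OctL, e ⊆ f ↔ (f = f1 ∨ f = f2)) → (f1 ∈ A ↔ f2 ∈ A) := by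
    intro e f1 f2 hc hne hiff
    have h1 := heA e hc
    rw [Finset.filter_congr (fun f hf => by
      simpa using hiff f (hA hf))] at h1
    exact pairEven A f1 f2 hne h1
  have d01 : ∀ i j : Bool, ({(0,i),(1,j)} : Finset (Fin 3 × Bool)).card = 2 ∧
      F i j false ≠ F i j true := by decide
  have d02 : ∀ i k : Bool, ({(0,i),(2,k)} : Finset (Fin 3 × Bool)).card = 2 ∧
      F i false k ≠ F i true k := by decide
  have d12 : ∀ j k : Bool, ({(1,j),(2,k)} : Finset (Fin 3 × Bool)).card = 2 ∧
      F false j k ≠ F true j k := by decide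
  have c2 : ∀ i j, (F i j false ∈ A ↔ F i j true ∈ A) := fun i j =>
    mk {(0,i),(1,j)} (F i j false) (F i j true) (d01 i j).1 (d01 i j).2 (edge01 i j)
  have c1 : ∀ i k, (F i false k ∈ A ↔ F i true k ∈ A) := fun i k =>
    mk {(0,i),(2,k)} (F i false k) (F i true k) (d02 i k).1 (d02 i k).2 (edge02 i k)
  have c0 : ∀ j k, (F false j k ∈ A ↔ F true j k ∈ A) := fun j k =>
    mk {(1,j),(2,k)} (F false j k) (F true j k) (d12 j k).1 (d12 j k).2 (edge12 j k)
  have hall : ∀ i j k, (F i j k ∈ A ↔ F false false false ∈ A) := by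
    intro i j k
    have s0 : F i j k ∈ A ↔ F false j k ∈ A := by
      cases i with
      | false => exact Iff.rfl
      | true => exact (c0 j k).symm
    have s1 : F false j k ∈ A ↔ F false false k ∈ A := by
      cases j with
      | false => exact Iff.rfl
      | true => exact (c1 false k).symm
    have s2 : F false false k ∈ A ↔ F false false false ∈ A := by
      cases k with
      | false => exact Iff.rfl
      | true => exact (c2 false false).symm
    exact s0.trans (s1.trans s2)
  have hoct : ∀ f ∈ OctL, ∃ i j k, f = F i j k := by decide
  by_cases h0 : F false false false ∈ A
  · right
    refine Finset.Subset.antisymm hA fun f hf => ?_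
    obtain ⟨i, j, k, rfl⟩ := hoct f hf
    exact (hall i j k).mpr h0
  · left
    refine Finset.eq_empty_of_forall_notMem fun f hf => ?_
    obtain ⟨i, j, k, rfl⟩ := hoct f (hA hf)
    exact h0 ((hall i j k).mp hf)

/-- The boundary of the octahedron — the eight triangles on `Fin 3 × Bool` obtained
by choosing one vertex from each antipodal pair — is a circlet: it is even, and its
face set cannot be partitioned into two nonempty parts each forming an even
2-complex. -/
theorem stmt_15 :
    EvenPart (Finset.univ.filter fun s : Finset (Fin 3 × Bool) =>
        s.card = 3 ∧ s.image Prod.fst = Finset.univ) ∧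
    ¬ ∃ A B : Finset (Finset (Fin 3 × Bool)), A.Nonempty ∧ B.Nonempty ∧ Disjoint A B ∧
        A ∪ B = (Finset.univ.filter fun s : Finset (Fin 3 × Bool) =>
          s.card = 3 ∧ s.image Prod.fst = Finset.univ) ∧
        EvenPart A ∧ EvenPart B := by
  rw [oct_eq]
  refine ⟨octEven, ?_⟩
  rintro ⟨A, B, hA, hB, hdisj, hunion, heA, heB⟩
  have hAsub : A ⊆ OctL := by rw [← hunion]; exact Finset.subset_union_left
  rcases key A hAsub heA with h | h
  · exact hA.ne_empty h
  · have hBsub : B ⊆ OctL := by rw [← hunion]; exact Finset.subset_union_right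
    have : B = ∅ := by
      rw [← h] at hBsub
      exact Finset.eq_empty_of_forall_notMem fun x hx =>
        (Finset.disjoint_left.mp hdisj) (hBsub hx) hx
    exact hB.ne_empty this
end

section
/- If every edge of a finite 2-complex K has degree exactly 2 and K is connected in the sense that its face-adjacency graph (faces adjacent when sharing an edge) is connected, then K is a circlet. -/
/-- The degree of an edge in a sub-2-complex. -/
def edgeDeg {F E : Type*} [DecidableEq E] (bd : F → Finset E) (S : Finset F) (e : E) : ℕ :=
  (S.filter fun f => e ∈ bd f).card

/-- Evenness of a sub-2-complex. -/
def IsEvenComplex {F E : Type*} [DecidableEq E] (bd : F → Finset E) (S : Finset F) : Prop :=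
  ∀ e : E, Even (edgeDeg bd S e)

/-- If every edge of a finite 2-complex has degree exactly 2 and the
face-adjacency graph (faces adjacent when they share an edge) is connected, then
the complex is a circlet: it is even and admits no partition of its faces into two
nonempty even parts. -/
theorem stmt_17 {F E : Type*} [Fintype F] [DecidableEq F] [DecidableEq E]
    (bd : F → Finset E)
    (hdeg : ∀ e : E, edgeDeg bd Finset.univ e = 2)
    (hconn : (SimpleGraph.fromRel fun f g : F => ∃ e : E, e ∈ bd f ∧ e ∈ bd g).Connected) :
    (Finset.univ : Finset F).Nonempty ∧ IsEvenComplex bd Finset.univ ∧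
      ¬ ∃ A B : Finset F, A.Nonempty ∧ B.Nonempty ∧ Disjoint A B ∧
          A ∪ B = Finset.univ ∧ IsEvenComplex bd A ∧ IsEvenComplex bd B := by
  have hne : (Finset.univ : Finset F).Nonempty := by
    have : Nonempty F := hconn.nonempty
    exact Finset.univ_nonempty
  refine ⟨hne, fun e => by rw [hdeg e]; exact even_two, ?_⟩
  rintro ⟨A, B, hA, hB, hdisj, hunion, heA, heB⟩
  -- key: A is closed under adjacency
  have hclosed : ∀ f g : F,
      (SimpleGraph.fromRel fun f g : F => ∃ e : E, e ∈ bd f ∧ e ∈ bd g).Adj f g →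
      f ∈ A → g ∈ A := by
    intro f g hadj hf
    obtain ⟨hne', hor⟩ := hadj
    obtain ⟨e, hef, heg⟩ : ∃ e : E, e ∈ bd f ∧ e ∈ bd g := by
      rcases hor with ⟨e, h1, h2⟩ | ⟨e, h1, h2⟩
      · exact ⟨e, h1, h2⟩
      · exact ⟨e, h2, h1⟩
    have hsub : A.filter (fun f => e ∈ bd f) ⊆ Finset.univ.filter (fun f => e ∈ bd f) :=
      Finset.filter_subset_filter _ (Finset.subset_univ A)
    have h1 : 1 ≤ edgeDeg bd A e := by
      have : f ∈ A.filter (fun f => e ∈ bd f) := Finset.mem_filter.mpr ⟨hf, hef⟩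
      exact Finset.card_pos.mpr ⟨f, this⟩
    have h2 : 2 ≤ edgeDeg bd A e := by
      rcases heA e with ⟨k, hk⟩
      omega
    have hle : edgeDeg bd A e ≤ 2 := by
      rw [← hdeg e]; exact Finset.card_le_card hsub
    have heq : A.filter (fun f => e ∈ bd f) = Finset.univ.filter (fun f => e ∈ bd f) :=
      Finset.eq_of_subset_of_card_le hsub (by
        change edgeDeg bd Finset.univ e ≤ edgeDeg bd A e
        have h3 := hdeg e
        omega)
    have : g ∈ A.filter (fun f => e ∈ bd f) := by
      rw [heq]; exact Finset.mem_filter.mpr ⟨Finset.mem_univ g, heg⟩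
    exact (Finset.mem_filter.mp this).1
  obtain ⟨a, ha⟩ := hA
  obtain ⟨b, hb⟩ := hB
  have hreach := hconn.preconnected a b
  obtain ⟨w⟩ := hreach
  have : b ∈ A := by
    clear hb
    induction w with
    | nil => exact ha
    | cons h p ih => exact ih (hclosed _ _ h ha)
  exact (Finset.disjoint_left.mp hdisj this) hb
end
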